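/- Let f: S_m × S_m → ℂ be defined by f(ρ,σ) = t^{o(ρσ)} for a fixed complex number t, where o(π) is the number of cycles of π ∈ S_m. For t a nonnegative integer n, the S_m × S_m matrix (n^{o(ρσ)})_{ρ,σ∈S_m} has rank at most n^{2m}. -/

import Mathlib

open Equiv Equiv.Perm Finset

private lemma inv_zpow_aux {m n : ℕ} {π : Equiv.Perm (Fin m)} {g : Fin m → Fin n}
    (hg : ∀ x, g (π x) = g x) : ∀ (i : ℤ) (x : Fin m), g ((π ^ i) x) = g x := by
  have hinv : ∀ x, g (π⁻¹ x) = g x := by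
    intro x
    conv_rhs => rw [← Equiv.apply_symm_apply π x]
    exact (hg (π⁻¹ x)).symm
  intro i
  induction i using Int.induction_on with
  | zero => simp
  | succ k ih =>
      intro x
      rw [zpow_add_one, Equiv.Perm.mul_apply, ih, hg]
  | pred k ih =>
      intro x
      rw [zpow_sub_one, Equiv.Perm.mul_apply, ih, hinv]

private lemma card_invariant_aux {m : ℕ} (π : Equiv.Perm (Fin m)) (n : ℕ) :
    Fintype.card {g : Fin m → Fin n // ∀ x, g (π x) = g x} =
      n ^ (Multiset.card π.cycleType + (Finset.univ.filter fun x => π x = x).card) := by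
  classical
  -- a chosen point in the support of each cycle factor
  have hpt : ∀ c : π.cycleFactorsFinset, ∃ x, x ∈ (c : Equiv.Perm (Fin m)).support := by
    intro c
    obtain ⟨x, hx, -⟩ := (Equiv.Perm.mem_cycleFactorsFinset_iff.1 c.2).1
    exact ⟨x, Equiv.Perm.mem_support.2 hx⟩
  choose pt hpt using hpt
  set F : {g : Fin m → Fin n // ∀ x, g (π x) = g x} →
      (π.cycleFactorsFinset → Fin n) × ({x : Fin m // π x = x} → Fin n) :=
    fun g => (fun c => g.1 (pt c), fun x => g.1 x.1) with hF
  have hbij : Function.Bijective F := by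
    constructor
    · rintro ⟨g, hg⟩ ⟨g', hg'⟩ h
      have h1 := congrArg Prod.fst h
      have h2 := congrArg Prod.snd h
      simp only [hF] at h1 h2
      apply Subtype.ext
      funext x
      show g x = g' x
      by_cases hx : π x = x
      · exact congrFun h2 ⟨x, hx⟩
      · have hmem : π.cycleOf x ∈ π.cycleFactorsFinset :=
          Equiv.Perm.cycleOf_mem_cycleFactorsFinset_iff.2 (Equiv.Perm.mem_support.2 hx)
        set c : π.cycleFactorsFinset := ⟨π.cycleOf x, hmem⟩
        have hsc : π.SameCycle x (pt c) := by
          have := hpt c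
          simp only [c] at this
          exact ((Equiv.Perm.mem_support_cycleOf_iff).1 this).1
        obtain ⟨i, hi⟩ := hsc
        have e1 : g x = g (pt c) := by rw [← hi]; exact (inv_zpow_aux hg i x).symm
        have e1' : g' x = g' (pt c) := by rw [← hi]; exact (inv_zpow_aux hg' i x).symm
        rw [e1, e1', congrFun h1 c]
    · rintro ⟨a, b⟩
      refine ⟨⟨fun x => if h : π x = x then b ⟨x, h⟩ else
        a ⟨π.cycleOf x, Equiv.Perm.cycleOf_mem_cycleFactorsFinset_iff.2
          (Equiv.Perm.mem_support.2 h)⟩, ?_⟩, ?_⟩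
      · intro x
        by_cases hx : π x = x
        · simp [hx]
        · have hx' : ¬ π (π x) = π x := fun h => hx (π.injective h)
          simp only [dif_neg hx', dif_neg hx]
          exact congrArg a (Subtype.ext (Equiv.Perm.cycleOf_self_apply π x))
      · simp only [hF, Prod.mk.injEq]
        constructor
        · funext c
          have hc : ¬ π (pt c) = pt c := by
            have := Equiv.Perm.mem_cycleFactorsFinset_support_le c.2 (hpt c)
            exact Equiv.Perm.mem_support.1 this
          simp only [dif_neg hc]
          exact congrArg a (Subtype.ext (Equiv.Perm.cycle_is_cycleOf (hpt c) c.2).symm)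
        · funext x
          simp only [dif_pos x.2]
  rw [Fintype.card_of_bijective hbij, Fintype.card_prod, Fintype.card_fun, Fintype.card_fun,
    Fintype.card_fin, Fintype.card_coe, Fintype.card_subtype, ← pow_add]
  congr 2
  rw [Equiv.Perm.cycleType_def, Multiset.card_map]
  rfl

/-- For a nonnegative integer `n`, the `S_m × S_m` matrix with `(ρ,σ)`-entry `n^{o(ρσ)}`
(where `o(π)` is the number of orbits of `π`) has rank at most `n^{2m}`. -/
theorem stmt12 (n m : ℕ) :
    (Matrix.of fun ρ σ : Equiv.Perm (Fin m) =>
      (n : ℂ) ^ ((ρ * σ).cycleType.card +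
        (Finset.univ.filter fun x => (ρ * σ) x = x).card)).rank ≤ n ^ (2 * m) := by
  classical
  set κ := ((Fin m → Fin n) × (Fin m → Fin n))
  set A : Matrix (Equiv.Perm (Fin m)) κ ℂ :=
    Matrix.of fun ρ p => if p.1 = p.2 ∘ ρ then 1 else 0 with hA
  set B : Matrix κ (Equiv.Perm (Fin m)) ℂ :=
    Matrix.of fun p σ => if p.2 = p.1 ∘ σ then 1 else 0 with hB
  have hM : (Matrix.of fun ρ σ : Equiv.Perm (Fin m) =>
      (n : ℂ) ^ ((ρ * σ).cycleType.card +
        (Finset.univ.filter fun x => (ρ * σ) x = x).card)) = A * B := by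
    ext ρ σ
    rw [Matrix.mul_apply, Fintype.sum_prod_type_right]
    have step1 : ∀ g : Fin m → Fin n,
        (∑ f : Fin m → Fin n, A ρ (f, g) * B (f, g) σ) =
          if g = (g ∘ ρ) ∘ σ then (1 : ℂ) else 0 := by
      intro g
      simp only [hA, hB, Matrix.of_apply, boole_mul]
      rw [Finset.sum_ite_eq' Finset.univ (g ∘ ⇑ρ) (fun f => if g = f ∘ ⇑σ then (1:ℂ) else 0)]
      simp
    rw [Finset.sum_congr rfl (fun g _ => step1 g), Finset.sum_boole]
    have hcard : (Finset.univ.filter fun g : Fin m → Fin n => g = (g ∘ ⇑ρ) ∘ ⇑σ).card =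
        Fintype.card {g : Fin m → Fin n // ∀ x, g ((ρ * σ) x) = g x} := by
      rw [Fintype.card_subtype]
      refine congrArg Finset.card (Finset.filter_congr fun g _ => ?_)
      constructor
      · intro h x
        simpa [Equiv.Perm.mul_apply] using (congrFun h x).symm
      · intro h
        funext x
        simpa [Equiv.Perm.mul_apply] using (h x).symm
    rw [hcard, card_invariant_aux (ρ * σ) n]
    push_cast
    rfl
  rw [hM]
  calc (A * B).rank ≤ A.rank := Matrix.rank_mul_le_left A B
    _ ≤ Fintype.card κ := Matrix.rank_le_card_width A
    _ = n ^ (2 * m) := by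
        simp only [κ, Fintype.card_prod, Fintype.card_fun, Fintype.card_fin]
        rw [← pow_add, two_mul]
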